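/- arXiv:1701.06329 — 7 statements merged into one kernel-verified Lean document; each statement's English description precedes it below -/
import Mathlib

section
/- In F_q[x], the sum over i from 0 to (q^m-q)/(q-1) of (1+x)^{i(q-1)} equals the sum over j from 0 to (q^m-q)/(q-1) of x^{j(q-1)}. Equivalently, for each t with 0 ≤ t ≤ q^m - q, the sum of binomial coefficients C(i(q-1), t) over all i with 0 ≤ i ≤ (q^m-q)/(q-1) is congruent mod p to 1 if (q-1) divides t, and to 0 otherwise. -/
open Polynomial Finset

/-- in `F_q[x]`, `∑_{i=0}^{(q^m-q)/(q-1)} (1+x)^{i(q-1)} = ∑_j x^{j(q-1)}`;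
equivalently, for `0 ≤ t ≤ q^m - q`, `∑_i C(i(q-1), t) ≡ 1 (mod p)` if `(q-1) ∣ t`
and `≡ 0 (mod p)` otherwise. -/
theorem statement1 (p : ℕ) (hp : p.Prime) (e : ℕ) (he : 1 ≤ e) (q : ℕ) (hq : q = p ^ e)
    (m : ℕ) (hm : 1 ≤ m) (F : Type) [Field F] [Fintype F] (hF : Fintype.card F = q) :
    ((∑ i ∈ Finset.range ((q ^ m - q) / (q - 1) + 1),
        ((1 : Polynomial F) + Polynomial.X) ^ (i * (q - 1)))
      = ∑ j ∈ Finset.range ((q ^ m - q) / (q - 1) + 1),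
          (Polynomial.X : Polynomial F) ^ (j * (q - 1)))
    ∧ ∀ t : ℕ, t ≤ q ^ m - q →
        ((∑ i ∈ Finset.range ((q ^ m - q) / (q - 1) + 1),
            Nat.choose (i * (q - 1)) t : ℕ) : ZMod p)
          = if (q - 1) ∣ t then 1 else 0 := by
  haveI : Fact p.Prime := ⟨hp⟩
  -- basic numerics
  have hq2 : 2 ≤ q := by
    subst hq
    exact le_trans hp.two_le (Nat.le_self_pow (by omega) p)
  -- characteristic of F is p
  haveI hcharF : CharP F p := by
    obtain ⟨p', hp'⟩ := CharP.exists F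
    haveI := hp'
    obtain ⟨n, hp'prime, hcard⟩ := FiniteField.card F p'
    have hpp' : p = p' := by
      have h1 : p ∣ p' ^ (n : ℕ) := by
        rw [← hcard, hF, hq]
        exact dvd_pow_self p (by omega)
      have := hp.dvd_of_dvd_pow h1
      exact ((Nat.prime_dvd_prime_iff_eq hp hp'prime).mp this)
    rwa [hpp']
  set d : ℕ := q - 1 with hd
  set N : ℕ := (q ^ m - q) / d with hN
  have hd1 : 1 ≤ d := by omega
  have hqm : q ≤ q ^ m := Nat.le_self_pow (by omega) q
  have hdvd : d ∣ q ^ m - q := by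
    have h1 : d ∣ q ^ m - 1 := by
      simpa using Nat.sub_dvd_pow_sub_pow q 1 m
    have h2 : d ∣ q - 1 := dvd_rfl
    have := Nat.dvd_sub h1 h2
    have heq : q ^ m - 1 - (q - 1) = q ^ m - q := by omega
    rwa [heq] at this
  have hNd : N * d = q ^ m - q := Nat.div_mul_cancel hdvd
  have hN1 : d * (N + 1) = q ^ m - 1 := by
    have : d * (N + 1) = N * d + d := by ring
    omega
  -- Frobenius facts
  have hfrob : ∀ k : ℕ, ((1 : F[X]) + X) ^ p ^ k = 1 + X ^ p ^ k := by
    intro k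
    rw [add_pow_char_pow, one_pow]
  have hfq : ((1 : F[X]) + X) ^ q = 1 + X ^ q := by rw [hq]; exact hfrob e
  have hfqm : ((1 : F[X]) + X) ^ q ^ m = 1 + X ^ q ^ m := by
    rw [hq, ← pow_mul]; exact hfrob (e * m)
  -- geometric sum computation
  have aux : ∀ y : F[X], (y ^ q - y) * ∑ i ∈ Finset.range (N + 1), y ^ (i * d)
      = y ^ q ^ m - y := by
    intro y
    have hg := geom_sum_mul (y ^ d) (N + 1)
    have h1 : ∀ i, y ^ (i * d) = (y ^ d) ^ i := fun i => by rw [← pow_mul, mul_comm]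
    simp_rw [h1]
    have hyq : y ^ q = y ^ d * y := by rw [← pow_succ]; congr 1; omega
    have hexp : d * (N + 1) + 1 = q ^ m := by
      have : 1 ≤ q ^ m := by omega
      omega
    calc (y ^ q - y) * ∑ i ∈ Finset.range (N + 1), (y ^ d) ^ i
        = ((∑ i ∈ Finset.range (N + 1), (y ^ d) ^ i) * (y ^ d - 1)) * y := by
          rw [hyq]; ring
      _ = ((y ^ d) ^ (N + 1) - 1) * y := by rw [hg]
      _ = y ^ (d * (N + 1) + 1) - y := by rw [← pow_mul, pow_succ]; ring
      _ = y ^ q ^ m - y := by rw [hexp]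
  -- the key polynomial identity
  have h0 : (X : F[X]) ^ q - X ≠ 0 := by
    intro h
    have h' : (X : F[X]) ^ q = X := by
      have := sub_eq_zero.mp h; exact this
    have := congrArg natDegree h'
    rw [natDegree_X_pow, natDegree_X] at this
    omega
  have hpoly : (∑ i ∈ Finset.range (N + 1), ((1 : F[X]) + X) ^ (i * d))
      = ∑ j ∈ Finset.range (N + 1), (X : F[X]) ^ (j * d) := by
    apply mul_left_cancel₀ h0
    have e1 := aux (1 + X)
    rw [hfq, hfqm] at e1
    have e1' : ((X : F[X]) ^ q - X) * ∑ i ∈ Finset.range (N + 1), ((1 : F[X]) + X) ^ (i * d)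
        = X ^ q ^ m - X := by
      calc ((X : F[X]) ^ q - X) * ∑ i ∈ Finset.range (N + 1), ((1 : F[X]) + X) ^ (i * d)
          = ((1 + X ^ q) - (1 + X)) * ∑ i ∈ Finset.range (N + 1), ((1 : F[X]) + X) ^ (i * d) := by
            ring
        _ = (1 + X ^ q ^ m) - (1 + X) := e1
        _ = X ^ q ^ m - X := by ring
    rw [e1', aux X]
  refine ⟨hpoly, ?_⟩
  intro t ht
  -- take the coefficient of X^t
  have hcoeff := congrArg (fun P : F[X] => P.coeff t) hpoly
  simp only [finset_sum_coeff, coeff_one_add_X_pow, coeff_X_pow] at hcoeff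
  have hRHS : (∑ j ∈ Finset.range (N + 1), if t = j * d then (1 : F) else 0)
      = if d ∣ t then 1 else 0 := by
    by_cases hdv : d ∣ t
    · obtain ⟨j0, hj0⟩ := hdv
      have hc : d * N = N * d := Nat.mul_comm _ _
      have hj0le : j0 ≤ N := Nat.le_of_mul_le_mul_left (by omega : d * j0 ≤ d * N) (by omega)
      have hj0N : j0 ∈ Finset.range (N + 1) := Finset.mem_range.mpr (by omega)
      rw [Finset.sum_eq_single j0, if_pos (by rw [hj0, Nat.mul_comm]), if_pos ⟨j0, hj0⟩]
      · intro b _ hb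
        rw [if_neg]
        intro h
        apply hb
        have : d * j0 = d * b := by rw [← hj0, h, Nat.mul_comm]
        exact (Nat.eq_of_mul_eq_mul_left (by omega) this).symm
      · intro h; exact absurd hj0N h
    · rw [if_neg hdv]
      apply Finset.sum_eq_zero
      intro j _
      rw [if_neg]
      intro h
      exact hdv ⟨j, by rw [h, Nat.mul_comm]⟩
  rw [hRHS] at hcoeff
  -- transfer from F to ZMod p
  have hinj : Function.Injective (ZMod.castHom (dvd_refl p) F) :=
    (ZMod.castHom (dvd_refl p) F).injective
  apply hinj
  rw [map_natCast, apply_ite (ZMod.castHom (dvd_refl p) F), map_one, map_zero, Nat.cast_sum]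
  exact hcoeff
end

section
/- For q ≥ 2 and any integer a with 0 ≤ a ≤ q^3 - q^2, the representation a = m(q^2 - 1) + n(q^2 - q) with m, n nonnegative integers is unique: if m₁(q^2-1) + n₁(q^2-q) = m₂(q^2-1) + n₂(q^2-q) = a with all mᵢ, nᵢ ≥ 0, then m₁ = m₂ and n₁ = n₂. -/
set_option maxHeartbeats 1000000


/-- for `q ≥ 2` and `0 ≤ a ≤ q^3 - q^2`, the representation
`a = m(q^2-1) + n(q^2-q)` with `m, n ∈ ℕ` is unique. -/
theorem statement2 (q : ℕ) (hq : 2 ≤ q) (a : ℕ) (ha : a ≤ q ^ 3 - q ^ 2)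
    (m₁ n₁ m₂ n₂ : ℕ)
    (h₁ : m₁ * (q ^ 2 - 1) + n₁ * (q ^ 2 - q) = a)
    (h₂ : m₂ * (q ^ 2 - 1) + n₂ * (q ^ 2 - q) = a) :
    m₁ = m₂ ∧ n₁ = n₂ := by
  obtain ⟨p, rfl⟩ : ∃ p, q = p + 2 := ⟨q - 2, by omega⟩
  have e1 : (p + 2) ^ 2 - 1 = (p + 1) * (p + 3) := by
    have : (p + 2) ^ 2 = (p + 1) * (p + 3) + 1 := by ring
    omega
  have e2 : (p + 2) ^ 2 - (p + 2) = (p + 1) * (p + 2) := by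
    have : (p + 2) ^ 2 = (p + 1) * (p + 2) + (p + 2) := by ring
    omega
  have e3 : (p + 2) ^ 3 - (p + 2) ^ 2 = (p + 1) * ((p + 2) * (p + 2)) := by
    have : (p + 2) ^ 3 = (p + 1) * ((p + 2) * (p + 2)) + (p + 2) ^ 2 := by ring
    omega
  rw [e1, e2] at h₁ h₂
  rw [e3] at ha
  -- cancel (p+1)
  have h12 : (p + 1) * (m₁ * (p + 3) + n₁ * (p + 2))
      = (p + 1) * (m₂ * (p + 3) + n₂ * (p + 2)) := by
    have := h₁.trans h₂.symm
    nlinarith [this]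
  have hS : m₁ * (p + 3) + n₁ * (p + 2) = m₂ * (p + 3) + n₂ * (p + 2) :=
    Nat.eq_of_mul_eq_mul_left (by omega) h12
  -- bounds on m₁, m₂
  have hb : ∀ m n : ℕ, m * ((p + 1) * (p + 3)) + n * ((p + 1) * (p + 2)) = a → m ≤ p + 1 := by
    intro m n h
    by_contra hcon
    push_neg at hcon
    have h1 : m * ((p + 1) * (p + 3)) ≤ a := by omega
    have h2 : a ≤ (p + 1) * ((p + 2) * (p + 2)) := ha
    nlinarith
  have hm1 : m₁ ≤ p + 1 := hb m₁ n₁ h₁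
  have hm2 : m₂ ≤ p + 1 := hb m₂ n₂ h₂
  -- work in ℤ
  have key : (m₁ : ℤ) - m₂ = ((n₂ : ℤ) - n₁ - ((m₁ : ℤ) - m₂)) * (p + 2) := by
    have hz : (m₁ : ℤ) * (p + 3) + n₁ * (p + 2) = m₂ * (p + 3) + n₂ * (p + 2) := by
      exact_mod_cast hS
    linarith [hz]
  have hmeq : m₁ = m₂ := by
    set k : ℤ := (n₂ : ℤ) - n₁ - ((m₁ : ℤ) - m₂) with hk
    have hm1' : (m₁ : ℤ) ≤ p + 1 := by exact_mod_cast hm1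
    have hm2' : (m₂ : ℤ) ≤ p + 1 := by exact_mod_cast hm2
    have hm1'' : (0 : ℤ) ≤ m₁ := Int.ofNat_nonneg m₁
    have hm2'' : (0 : ℤ) ≤ m₂ := Int.ofNat_nonneg m₂
    have hp2 : (0 : ℤ) ≤ (p : ℤ) + 2 := by positivity
    have : k = 0 := by
      rcases lt_trichotomy k 0 with h | h | h
      · have h' : k ≤ -1 := by omega
        have := mul_le_mul_of_nonneg_right h' hp2
        linarith [key]
      · exact h
      · have h' : (1 : ℤ) ≤ k := by omega
        have := mul_le_mul_of_nonneg_right h' hp2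
        linarith [key]
    rw [this, zero_mul] at key
    have : (m₁ : ℤ) = m₂ := by linarith
    exact_mod_cast this
  refine ⟨hmeq, ?_⟩
  subst hmeq
  have hn : n₁ * (p + 2) = n₂ * (p + 2) := Nat.add_left_cancel hS
  exact Nat.eq_of_mul_eq_mul_right (by omega) hn
end

section
/- Let q ≥ 2. The coefficient of t^a in the power series expansion of f(t) = (1 - t^{q^3-1})(1 - t^{q^3-q}) / ((1 - t^{q^2-1})(1 - t^{q^2-q})), for 0 ≤ a ≤ q^3 - q^2, equals 1 if a is a nonnegative integer linear combination of q^2 - 1 and q^2 - q, and 0 otherwise. -/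
/-!
Since `q ^ 3 - q ≤ q ^ 3 - 1`, the numerator is `1` modulo `t ^ (q ^ 3 - q)`, and
`a ≤ q ^ 3 - q ^ 2 < q ^ 3 - q`; so the coefficient is that of
`1 / ((1 - t ^ (q ^ 2 - 1)) (1 - t ^ (q ^ 2 - q)))`, the number of ways of writing
`a = m (q ^ 2 - 1) + n (q ^ 2 - q)`. After dividing by `q - 1` such a representation reads
`m (q + 1) + n q`, which determines `m` modulo `q`; and `m < q` because `a ≤ q ^ 2 (q - 1)`.
So there is at most one representation.
-/

open scoped Classical

open Finset PowerSeries

theorem PowerSeries.coeff_one_sub_X_pow_mul {R : Type*} [Ring R] {n a : ℕ} (h : a < n)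
    (f : R⟦X⟧) : coeff a ((1 - X ^ n) * f) = coeff a f := by
  rw [sub_mul, one_mul, map_sub, coeff_X_pow_mul', if_neg (not_le.2 h), sub_zero]

theorem PowerSeries.coeff_mk_dvd_mul_mk_dvd {R : Type*} [Semiring R] (c d a : ℕ) :
    coeff a ((mk fun i => if c ∣ i then (1 : R) else 0) *
        mk fun j => if d ∣ j then (1 : R) else 0) =
      #{p ∈ antidiagonal a | c ∣ p.1 ∧ d ∣ p.2} := by
  simp only [coeff_mul, coeff_mk, ite_zero_mul_ite_zero, mul_one, sum_boole]

theorem Finset.card_filter_antidiagonal_dvd {c d a : ℕ}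
    (huniq : ∀ m n m' n', a = m * c + n * d → a = m' * c + n' * d →
      m * c = m' * c ∧ n * d = n' * d) :
    #{p ∈ antidiagonal a | c ∣ p.1 ∧ d ∣ p.2} =
      if ∃ m n, a = m * c + n * d then 1 else 0 := by
  split_ifs with hrep
  · obtain ⟨m, n, hmn⟩ := hrep
    refine card_eq_one.2 ⟨(m * c, n * d), eq_singleton_iff_unique_mem.2 ⟨?_, ?_⟩⟩
    · simp [hmn]
    · rintro ⟨_, _⟩ hp
      obtain ⟨hsum, ⟨m', rfl⟩, ⟨n', rfl⟩⟩ := by simpa using hp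
      obtain ⟨h1, h2⟩ := huniq m' n' m n (by rw [← hsum]; ring) hmn
      rw [mul_comm c, mul_comm d, h1, h2]
  · refine card_eq_zero.2 (filter_eq_empty_iff.2 ?_)
    rintro ⟨_, _⟩ hp ⟨⟨m, rfl⟩, ⟨n, rfl⟩⟩
    exact hrep ⟨m, n, by rw [← (mem_antidiagonal (A := ℕ)).1 hp]; ring⟩

theorem Nat.eq_and_eq_of_mul_add_mul_eq {c d m n m' n' : ℕ} (hcd : c.Coprime d) (hm : m < d)
    (hm' : m' < d) (h : m * c + n * d = m' * c + n' * d) : m = m' ∧ n = n' := by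
  have hmod : m * c ≡ m' * c [MOD d] := by
    simpa [Nat.ModEq, Nat.add_mul_mod_self_right] using congrArg (· % d) h
  obtain rfl : m = m' := (hmod.cancel_right_of_coprime hcd.symm).eq_of_lt_of_lt hm hm'
  exact ⟨rfl, Nat.eq_of_mul_eq_mul_right (by omega) (Nat.add_left_cancel h)⟩

theorem Nat.repr_sq_sub_one_sq_sub_self_unique {q m n m' n' : ℕ} (hq : 2 ≤ q)
    (h : m * (q ^ 2 - 1) + n * (q ^ 2 - q) = m' * (q ^ 2 - 1) + n' * (q ^ 2 - q))
    (hb : m * (q ^ 2 - 1) + n * (q ^ 2 - q) ≤ q ^ 3 - q ^ 2) : m = m' ∧ n = n' := by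
  obtain ⟨k, rfl⟩ : ∃ k, q = k + 1 := ⟨q - 1, by omega⟩
  have hc : (k + 1) ^ 2 - 1 = (k + 2) * k := Nat.sub_eq_of_eq_add (by ring)
  have hd : (k + 1) ^ 2 - (k + 1) = (k + 1) * k := Nat.sub_eq_of_eq_add (by ring)
  have he : (k + 1) ^ 3 - (k + 1) ^ 2 = (k + 1) ^ 2 * k := Nat.sub_eq_of_eq_add (by ring)
  have hk : 0 < k := by omega
  rw [hc, hd] at h hb
  rw [he] at hb
  have hlt : ∀ {m n : ℕ}, m * ((k + 2) * k) + n * ((k + 1) * k) ≤ (k + 1) ^ 2 * k →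
      m < k + 1 := by
    intro m n hbound
    have : m * (k + 2) ≤ (k + 1) ^ 2 := by nlinarith
    nlinarith
  refine Nat.eq_and_eq_of_mul_add_mul_eq (Nat.coprime_self_add_left.2 (Nat.coprime_one_left _))
    (hlt hb) (hlt (h ▸ hb)) ?_
  exact Nat.eq_of_mul_eq_mul_right hk (by linear_combination h)

/-- the coefficient of `t^a` (for `0 ≤ a ≤ q^3 - q^2`) in the power series
`f(t) = (1-t^{q^3-1})(1-t^{q^3-q}) · (∑_{i≥0} t^{i(q^2-1)}) · (∑_{j≥0} t^{j(q^2-q)})`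
is `1` if `a` is a nonnegative integer combination of `q^2-1` and `q^2-q`, else `0`. -/
theorem statement3 (q : ℕ) (hq : 2 ≤ q) (a : ℕ) (ha : a ≤ q ^ 3 - q ^ 2) :
    PowerSeries.coeff (R := ℤ) a
      (((1 : PowerSeries ℤ) - (PowerSeries.X : PowerSeries ℤ) ^ (q ^ 3 - 1)) *
        (1 - (PowerSeries.X : PowerSeries ℤ) ^ (q ^ 3 - q)) *
        (PowerSeries.mk fun i => if (q ^ 2 - 1) ∣ i then (1 : ℤ) else 0) *
        (PowerSeries.mk fun j => if (q ^ 2 - q) ∣ j then (1 : ℤ) else 0))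
      = if ∃ m n : ℕ, a = m * (q ^ 2 - 1) + n * (q ^ 2 - q) then 1 else 0 := by
  have hq2 : q < q ^ 2 := by nlinarith
  have hq3 : q ^ 2 < q ^ 3 := by nlinarith
  have ha₂ : a < q ^ 3 - q := by omega
  rw [mul_assoc, mul_assoc, coeff_one_sub_X_pow_mul (by omega), coeff_one_sub_X_pow_mul ha₂,
    coeff_mk_dvd_mul_mk_dvd, card_filter_antidiagonal_dvd, Nat.cast_ite, Nat.cast_one,
    Nat.cast_zero]
  intro m n m' n' hmn hmn'
  obtain ⟨rfl, rfl⟩ := Nat.repr_sq_sub_one_sq_sub_self_unique hq (hmn ▸ hmn') (hmn ▸ ha)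
  exact ⟨rfl, rfl⟩
end

section
/- Over the field F_q (q a power of prime p), the coefficient of t^{q^2+q} in the polynomial ((1 - t^{q+1})/(1 - t))^{2q-1} = (1 + t + t^2 + ... + t^q)^{2q-1} is congruent to -1 mod p. -/
open Polynomial Finset

/-- over `F_p` (with `q = p^e`), the coefficient of `t^{q^2+q}` in
`(1 + t + t^2 + ⋯ + t^q)^{2q-1}` is `-1`. -/
theorem statement5 (p : ℕ) (hp : p.Prime) (e : ℕ) (he : 1 ≤ e) (q : ℕ) (hq : q = p ^ e) :
    Polynomial.coeff
      ((∑ i ∈ Finset.range (q + 1), (Polynomial.X : Polynomial (ZMod p)) ^ i) ^ (2 * q - 1))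
      (q ^ 2 + q) = -1 := by
  haveI : Fact p.Prime := ⟨hp⟩
  have hq2 : 2 ≤ q := by
    rw [hq]
    calc 2 ≤ p := hp.two_le
    _ = p ^ 1 := (pow_one p).symm
    _ ≤ p ^ e := Nat.pow_le_pow_right hp.pos he
  set S : (ZMod p)[X] := ∑ i ∈ Finset.range (q + 1), (X : (ZMod p)[X]) ^ i with hS
  set u : (ZMod p)[X] := 1 - X with hu
  have hu0 : u ≠ 0 := by
    intro h
    have h1 := congrArg (fun f => Polynomial.coeff f 1) h
    simp [hu, Polynomial.coeff_one] at h1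
  have huq : u ^ q = 1 - X ^ q := by
    rw [hq, hu, sub_pow_char_pow, one_pow]
  have hSu : S * u = 1 - X ^ (q + 1) := by
    have h := geom_sum_mul (X : (ZMod p)[X]) (q + 1)
    rw [hS, hu]
    linear_combination -h
  set a : (ZMod p)[X] := u ^ (q - 1) with ha
  have hua : u * a = u ^ q := by
    rw [ha, ← pow_succ']
    congr 1
    omega
  -- S = a + X^q
  have hSa : S = a + X ^ q := by
    have h : (a + X ^ q) * u = S * u := by
      rw [hSu, add_mul, mul_comm a u, hua, huq, pow_succ]
      ring
    exact (mul_right_cancel₀ hu0 h).symm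
  -- Frobenius : S ^ q = ∑ X^(q*i)
  have hA : S ^ q = ∑ i ∈ Finset.range (q + 1), (X : (ZMod p)[X]) ^ (q * i) := by
    have h := map_sum (iterateFrobenius ((ZMod p)[X]) p e)
      (fun i => (X : (ZMod p)[X]) ^ i) (Finset.range (q + 1))
    simp only [iterateFrobenius_def, ← pow_mul] at h
    rw [← hS, ← hq] at h
    rw [h]
    exact Finset.sum_congr rfl fun i _ => by rw [mul_comm]
  set T : (ZMod p)[X] := S ^ (q - 1) with hT
  -- divisibility: u ^ q ∣ T - (1 - a)
  have hdvd1 : u ^ q ∣ T - (1 + a) ^ (q - 1) := by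
    have h1 : u ^ q ∣ S - (1 + a) := by
      have h : S - (1 + a) = -(u ^ q) := by rw [hSa, huq]; ring
      rw [h]
      exact dvd_neg.mpr dvd_rfl
    exact h1.trans (sub_dvd_pow_sub_pow S (1 + a) (q - 1))
  have e1 : (1 + a) * (1 + a) ^ (q - 1) = 1 + a ^ q := by
    rw [← pow_succ']
    have h : q - 1 + 1 = q := by omega
    rw [h, hq, add_pow_char_pow, one_pow]
  have hcop : IsCoprime (u ^ q) (1 + a) := by
    refine IsCoprime.pow_left ⟨-(u ^ (q - 2)), 1, ?_⟩
    have h2 : u ^ (q - 2) * u = a := by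
      rw [ha, ← pow_succ]
      congr 1
      omega
    rw [one_mul]
    linear_combination -h2
  have hdvd2 : u ^ q ∣ (1 + a) ^ (q - 1) - (1 - a) := by
    apply hcop.dvd_of_dvd_mul_left
    have e2 : a ^ q = u ^ q * u ^ (q * (q - 2)) := by
      rw [ha, ← pow_mul, ← pow_add]
      congr 1
      obtain ⟨m, rfl⟩ : ∃ m, q = m + 2 := ⟨q - 2, by omega⟩
      have h1 : m + 2 - 1 = m + 1 := by omega
      have h2 : m + 2 - 2 = m := by omega
      rw [h1, h2]
      ring
    have e3 : a * a = u ^ q * u ^ (q - 2) := by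
      rw [ha, ← pow_add, ← pow_add]
      congr 1
      omega
    refine ⟨u ^ (q * (q - 2)) + u ^ (q - 2), ?_⟩
    calc (1 + a) * ((1 + a) ^ (q - 1) - (1 - a))
        = (1 + a) * (1 + a) ^ (q - 1) - (1 - a * a) := by ring
      _ = 1 + a ^ q - (1 - a * a) := by rw [e1]
      _ = a ^ q + a * a := by ring
      _ = u ^ q * (u ^ (q * (q - 2)) + u ^ (q - 2)) := by rw [e2, e3]; ring
  have hdvd : u ^ q ∣ T - (1 - a) := by
    have h : T - (1 - a) = (T - (1 + a) ^ (q - 1)) + ((1 + a) ^ (q - 1) - (1 - a)) := by ring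
    rw [h]
    exact dvd_add hdvd1 hdvd2
  obtain ⟨Rr, hRr⟩ := hdvd
  have hTeq : T = (1 - a) + u ^ q * Rr := by linear_combination hRr
  -- degree bounds
  have hdegu : u.natDegree = 1 := by
    have h : u = -(X - C 1) := by rw [hu]; simp [Polynomial.C_1]
    rw [h, natDegree_neg, natDegree_X_sub_C]
  have hdega : a.natDegree ≤ q - 1 := by
    rw [ha]
    calc (u ^ (q - 1)).natDegree ≤ (q - 1) * u.natDegree := natDegree_pow_le
      _ = q - 1 := by rw [hdegu, mul_one]
  have hdegS : S.natDegree ≤ q := by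
    rw [hS]
    refine Polynomial.natDegree_sum_le_of_forall_le _ _ fun i hi => ?_
    rw [natDegree_X_pow]
    exact Nat.lt_succ_iff.mp (Finset.mem_range.mp hi)
  have hdegT : T.natDegree ≤ (q - 1) * q := by
    rw [hT]
    calc (S ^ (q - 1)).natDegree ≤ (q - 1) * S.natDegree := natDegree_pow_le
      _ ≤ (q - 1) * q := Nat.mul_le_mul_left _ hdegS
  -- constant coefficients
  have hT0 : T.eval 0 = 1 := by
    rw [hT, eval_pow, hS, eval_finset_sum]
    have h : ∑ i ∈ Finset.range (q + 1), ((X : (ZMod p)[X]) ^ i).eval 0 = 1 := by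
      rw [Finset.sum_eq_single 0]
      · simp
      · intro i _ hi
        simp [zero_pow hi]
      · intro h
        exact absurd (Finset.mem_range.mpr (by omega)) h
    rw [h, one_pow]
  have ha0 : a.eval 0 = 1 := by
    rw [ha, eval_pow, hu]
    simp
  have hRr0 : Rr.coeff 0 = 1 := by
    have h0 := congrArg (Polynomial.eval 0) hTeq
    simp only [eval_add, eval_sub, eval_mul, eval_pow, eval_one] at h0
    rw [hT0, ha0, hu] at h0
    simp only [eval_sub, eval_one, eval_X, sub_zero, one_pow, one_mul] at h0
    rw [Polynomial.coeff_zero_eq_eval_zero]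
    linear_combination -h0
  -- coefficient of Rr at q^2 + q is 0
  have hRrtop : Rr.coeff (q ^ 2 + q) = 0 := by
    by_cases hR0 : Rr = 0
    · simp [hR0]
    apply Polynomial.coeff_eq_zero_of_natDegree_lt
    have huq0 : u ^ q ≠ 0 := pow_ne_zero _ hu0
    have hdegm : (u ^ q * Rr).natDegree = q + Rr.natDegree := by
      rw [Polynomial.natDegree_mul huq0 hR0, natDegree_pow, hdegu, mul_one]
    have hdegsub : (u ^ q * Rr).natDegree ≤ (q - 1) * q := by
      rw [← hRr]
      refine (natDegree_sub_le _ _).trans (max_le hdegT ?_)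
      refine (natDegree_sub_le _ _).trans (max_le (by simp) (hdega.trans ?_))
      exact Nat.le_mul_of_pos_right _ (by omega)
    have h5 : q + Rr.natDegree ≤ (q - 1) * q := by rw [← hdegm]; exact hdegsub
    have h6 : (q - 1) * q ≤ q ^ 2 := by
      rw [pow_two]
      exact Nat.mul_le_mul_right q (Nat.sub_le q 1)
    have : 0 < q := by omega
    linarith
  -- coefficients of T at large indices
  have hTc : ∀ n : ℕ, q ≤ n → T.coeff n = Rr.coeff n - Rr.coeff (n - q) := by
    intro n hn
    have han : a.coeff n = 0 :=
      Polynomial.coeff_eq_zero_of_natDegree_lt (hdega.trans_lt (by omega))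
    have h1n : (1 : (ZMod p)[X]).coeff n = 0 := by
      rw [Polynomial.coeff_one]
      exact if_neg (by omega)
    have h := congrArg (fun f => Polynomial.coeff f n) hTeq
    rw [huq, sub_mul, one_mul, Polynomial.coeff_add, Polynomial.coeff_sub,
      Polynomial.coeff_sub, Polynomial.coeff_X_pow_mul', if_pos hn, han, h1n] at h
    rw [h]
    ring
  -- main computation
  have h2q : 2 * q - 1 = q + (q - 1) := by omega
  rw [h2q, pow_add, hA, ← hT, Finset.sum_mul, Polynomial.finset_sum_coeff]
  have hterm : ∀ i ∈ Finset.range (q + 1),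
      ((X : (ZMod p)[X]) ^ (q * i) * T).coeff (q ^ 2 + q)
        = Rr.coeff (q ^ 2 + q - q * i) - Rr.coeff (q ^ 2 + q - q * (i + 1)) := by
    intro i hi
    have hi' : i ≤ q := Nat.lt_succ_iff.mp (Finset.mem_range.mp hi)
    have hiq : q * i ≤ q ^ 2 := by
      rw [pow_two]
      exact Nat.mul_le_mul_left q hi'
    have hile : q * i ≤ q ^ 2 + q := hiq.trans (Nat.le_add_right _ _)
    rw [Polynomial.coeff_X_pow_mul', if_pos hile]
    have hge : q ≤ q ^ 2 + q - q * i :=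
      Nat.le_sub_of_add_le (by rw [Nat.add_comm]; exact Nat.add_le_add_right hiq q)
    rw [hTc _ hge]
    congr 2
    rw [Nat.sub_sub, ← Nat.mul_succ]
  rw [Finset.sum_congr rfl hterm]
  rw [Finset.sum_range_sub' (fun j => Rr.coeff (q ^ 2 + q - q * j)) (q + 1)]
  have hlast : q ^ 2 + q - q * (q + 1) = 0 := by
    have h : q * (q + 1) = q ^ 2 + q := by ring
    rw [h, Nat.sub_self]
  simp only [Nat.mul_zero, Nat.sub_zero, hlast, hRrtop, hRr0]
  ring
end

section
/- Let q be a prime power and G = GL_n(F_q) act on Q = F_q[x_1,...,x_n]/(x_1^q,...,x_n^q) by linear substitutions. Then the ring of invariants Q^G is the 2-dimensional F_q-vector space spanned by 1 and the image of x_1^{q-1} x_2^{q-1} ··· x_n^{q-1}; consequently the Hilbert series of Q^G is 1 + t^{n(q-1)}. -/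
/-!
Choose a representative `f` of an invariant class all of whose exponents are `< q`; its
coefficients can then be read off modulo `(x_1^q, …, x_n^q)`. Invariance under the diagonal
matrix scaling `x_i` by `c ∈ F^×` gives `c ^ m_i = 1` for every monomial `x^m` of `f`, so each
`m_i` is divisible by `q - 1`, hence is `0` or `q - 1`. The transvection `x_i ↦ x_i + x_j` acts
as `f ↦ f + x_j ∂_i f` modulo `x_j^2`; a monomial `c_m x^m` with `m_i = q - 1` and `m_j = 0`
would give `x_j ∂_i f` the coefficient `(q - 1) c_m ≠ 0` at `m - e_i + e_j`, an exponent that is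
`< q` everywhere and `< 2` in `x_j`, contradicting invariance. So only `1` and
`x_1^{q-1} ⋯ x_n^{q-1}` occur.

Conversely `GL_n(F)` is generated by invertible diagonal matrices, which fix
`x_1^{q-1} ⋯ x_n^{q-1}` because `d^{q-1} = 1`, and by transvections, which change it by a
multiple of `x_j^q` because `x_j ∣ (x_i + c x_j)^{q-1} - x_i^{q-1}`.
-/

open MvPolynomial Finset

/-- The action of `g ∈ GL_n(F)` on `F[x_1,…,x_n]` by linear substitution of variables. -/
noncomputable def glAct (F : Type) [Field F] (n : ℕ) (g : GL (Fin n) F) :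
    MvPolynomial (Fin n) F →ₐ[F] MvPolynomial (Fin n) F :=
  MvPolynomial.aeval fun i => ∑ j, (g : Matrix (Fin n) (Fin n) F) i j • MvPolynomial.X j

/-- The ideal `(x_1^N, …, x_n^N)`. -/
noncomputable def frobIdeal (F : Type) [Field F] (n N : ℕ) :
    Ideal (MvPolynomial (Fin n) F) :=
  Ideal.span (Set.range fun i : Fin n => (MvPolynomial.X i : MvPolynomial (Fin n) F) ^ N)

namespace MvPolynomial

section LinSubst

variable {R σ : Type*} [CommRing R]

lemma coeff_eq_zero_of_X_pow_dvd {p : MvPolynomial σ R} {j : σ} {k : ℕ} (h : X j ^ k ∣ p)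
    {m : σ →₀ ℕ} (hm : m j < k) : coeff m p = 0 := by
  obtain ⟨r, rfl⟩ := h
  rw [X_pow_eq_monomial, coeff_monomial_mul', if_neg]
  exact fun hle => hm.not_ge (by simpa using hle j)

variable [Fintype σ]

noncomputable def linSubst (A : Matrix σ σ R) : MvPolynomial σ R →ₐ[R] MvPolynomial σ R :=
  aeval fun i => ∑ j, A i j • X j

@[simp]
lemma linSubst_X (A : Matrix σ σ R) (i : σ) : linSubst A (X i) = ∑ j, A i j • X j :=
  aeval_X _ _

lemma linSubst_mul (A B : Matrix σ σ R) :
    linSubst (A * B) = (linSubst B).comp (linSubst A) := by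
  ext i : 1
  simp only [AlgHom.comp_apply, linSubst_X, map_sum, map_smul, Matrix.mul_apply,
    Finset.smul_sum, Finset.sum_smul, smul_smul]
  exact Finset.sum_comm

variable [DecidableEq σ]

@[simp]
lemma linSubst_diagonal_X (d : σ → R) (i : σ) :
    linSubst (Matrix.diagonal d) (X i) = C (d i) * X i := by
  simp [Matrix.diagonal_apply, ite_smul, smul_eq_C_mul]

lemma linSubst_diagonal_monomial (d : σ → R) (m : σ →₀ ℕ) (a : R) :
    linSubst (Matrix.diagonal d) (monomial m a) = monomial m ((∏ k, d k ^ m k) * a) := by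
  simp only [monomial_eq, Finsupp.prod_fintype _ _ (fun _ => pow_zero _), map_mul, map_prod,
    map_pow, linSubst_diagonal_X, algHom_C, algebraMap_eq, mul_pow, Finset.prod_mul_distrib]
  ring

lemma coeff_linSubst_diagonal (d : σ → R) (p : MvPolynomial σ R) (m : σ →₀ ℕ) :
    coeff m (linSubst (Matrix.diagonal d) p) = (∏ k, d k ^ m k) * coeff m p := by
  induction p using MvPolynomial.induction_on' with
  | monomial m' a =>
    rw [linSubst_diagonal_monomial, coeff_monomial, coeff_monomial]
    split_ifs with h
    · rw [h]
    · rw [mul_zero]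
  | add p r hp hr => rw [map_add, coeff_add, coeff_add, hp, hr, mul_add]

lemma linSubst_transvection_X_of_ne {i j k : σ} (c : R) (hk : k ≠ i) :
    linSubst (Matrix.transvection i j c) (X k) = X k := by
  simp [Matrix.transvection, Matrix.one_apply, hk.symm]

lemma linSubst_transvection_X_self {i j : σ} (c : R) :
    linSubst (Matrix.transvection i j c) (X i) = X i + C c * X j := by
  simp [Matrix.transvection, Matrix.single_apply, Matrix.one_apply, add_smul,
    Finset.sum_add_distrib, smul_eq_C_mul]

lemma X_sq_dvd_linSubst_transvection_sub {i j : σ} (c : R) (p : MvPolynomial σ R) :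
    X j ^ 2 ∣ linSubst (Matrix.transvection i j c) p - p - C c * X j * pderiv i p := by
  induction p using MvPolynomial.induction_on with
  | C a => simp
  | add p r hp hr =>
    convert dvd_add hp hr using 1
    simp only [map_add]
    ring
  | mul_X p k hp =>
    set D := linSubst (Matrix.transvection i j c) p - p - C c * X j * pderiv i p
    by_cases hk : k = i
    · subst hk
      convert dvd_add (dvd_mul_of_dvd_right hp (X k + C c * X j))
        (dvd_mul_right (X j ^ 2) (C c ^ 2 * pderiv k p)) using 1
      simp only [D, map_mul, linSubst_transvection_X_self, pderiv_mul, pderiv_X_self]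
      ring
    · convert dvd_mul_of_dvd_left hp (X k) using 1
      simp only [D, map_mul, linSubst_transvection_X_of_ne c hk, pderiv_mul, pderiv_X_of_ne hk]
      ring

lemma X_pow_succ_dvd_linSubst_transvection_prod_sub {i j : σ} (hij : i ≠ j) (c : R) (N : ℕ) :
    X j ^ (N + 1) ∣
      linSubst (Matrix.transvection i j c) (∏ k, X k ^ N)
        - ∏ k, (X k : MvPolynomial σ R) ^ N := by
  have hfix : ∀ k ∈ univ.erase i, linSubst (Matrix.transvection i j c) (X k ^ N) = X k ^ N :=
    fun k hk => by rw [map_pow, linSubst_transvection_X_of_ne c (ne_of_mem_erase hk)]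
  rw [← mul_prod_erase univ _ (mem_univ i), map_mul,
    map_prod, prod_congr rfl hfix, map_pow, linSubst_transvection_X_self, ← sub_mul, pow_succ']
  refine mul_dvd_mul ?_ (dvd_prod_of_mem _ (mem_erase.2 ⟨hij.symm, mem_univ j⟩))
  have hsub : C c * X j ∣ (X i + C c * X j) ^ N - X i ^ N := by
    convert sub_dvd_pow_sub_pow (X i + C c * X j) (X i) N using 1
    ring
  exact (dvd_mul_left (X j) (C c)).trans hsub

end LinSubst

section FrobIdeal

variable {F : Type} [Field F] {n q : ℕ}

lemma mem_frobIdeal_iff {p : MvPolynomial (Fin n) F} :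
    p ∈ frobIdeal F n q ↔ ∀ m ∈ p.support, ∃ i, q ≤ m i := by
  have : frobIdeal F n q = Ideal.span ((fun s => monomial s (1 : F)) ''
      Set.range fun i : Fin n => Finsupp.single i q) := by
    rw [frobIdeal, ← Set.range_comp]
    simp only [Function.comp_def, X_pow_eq_monomial]
  rw [this, mem_ideal_span_monomial_image]
  simp [Finsupp.single_le_iff]

lemma coeff_eq_zero_of_mem_frobIdeal {p : MvPolynomial (Fin n) F} (hp : p ∈ frobIdeal F n q)
    {m : Fin n →₀ ℕ} (hm : ∀ i, m i < q) : coeff m p = 0 := by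
  by_contra h
  obtain ⟨i, hi⟩ := mem_frobIdeal_iff.1 hp m (mem_support_iff.2 h)
  exact (hm i).not_ge hi

lemma linearIndependent_one_mk_prod_X_pow (hn : 1 ≤ n) (hq : 2 ≤ q) :
    LinearIndependent F ![(1 : MvPolynomial (Fin n) F ⧸ frobIdeal F n q),
      Ideal.Quotient.mk (frobIdeal F n q) (∏ i, X i ^ (q - 1))] := by
  classical
  rw [LinearIndependent.pair_iff]
  intro s t hst
  have hmem : C s + t • ∏ i, X i ^ (q - 1) ∈ frobIdeal F n q := by
    rw [← Ideal.Quotient.eq_zero_iff_mem, ← hst, ← Ideal.Quotient.mkₐ_eq_mk F, map_add,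
      map_smul, algHom_C, Algebra.algebraMap_eq_smul_one]
  let top : Fin n →₀ ℕ := Finsupp.indicator univ fun _ _ => q - 1
  have htop (i : Fin n) : top i = q - 1 := by simp [top]
  have hne : (0 : Fin n →₀ ℕ) ≠ top := fun h => by
    have := htop ⟨0, hn⟩
    rw [← h, Finsupp.coe_zero, Pi.zero_apply] at this
    omega
  have h0 := coeff_eq_zero_of_mem_frobIdeal hmem (m := 0) fun _ => Nat.zero_lt_of_lt hq
  have h1 := coeff_eq_zero_of_mem_frobIdeal hmem (m := top) fun i => by rw [htop]; omega
  simp only [coeff_add, coeff_C, coeff_smul, top, coeff_prod_X_pow, smul_eq_mul, if_neg hne,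
    if_true, mul_zero, mul_one, add_zero, zero_add] at h0 h1
  exact ⟨h0, h1⟩

lemma exists_mk_eq_of_exponents_lt (p : MvPolynomial (Fin n) F) :
    ∃ r : MvPolynomial (Fin n) F, Ideal.Quotient.mk (frobIdeal F n q) r
      = Ideal.Quotient.mk (frobIdeal F n q) p ∧ ∀ m ∈ r.support, ∀ i, m i < q := by
  classical
  let r := ∑ m ∈ p.support with ∀ i, m i < q, monomial m (coeff m p)
  have hr (m : Fin n →₀ ℕ) : coeff m r = if ∀ i, m i < q then coeff m p else 0 := by
    simp only [r, coeff_sum, coeff_monomial, Finset.sum_ite_eq', Finset.mem_filter,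
      mem_support_iff]
    by_cases h : ∀ i, m i < q <;> by_cases hm : coeff m p = 0 <;> simp [h, hm]
  refine ⟨r, ?_, fun m hm => ?_⟩
  · rw [Ideal.Quotient.mk_eq_mk_iff_sub_mem, mem_frobIdeal_iff]
    intro m hm
    rw [mem_support_iff, coeff_sub, hr] at hm
    by_contra! h
    simp [h] at hm
  · rw [mem_support_iff, hr] at hm
    by_contra h
    exact hm (if_neg h)

lemma glAct_eq_linSubst (g : GL (Fin n) F) :
    glAct F n g = linSubst (g : Matrix (Fin n) (Fin n) F) :=
  rfl

lemma natCast_mul_coeff_eq_zero_of_transvection (hq : 2 ≤ q) {i j : Fin n}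
    {f : MvPolynomial (Fin n) F}
    (hf : linSubst (Matrix.transvection i j 1) f - f ∈ frobIdeal F n q)
    {m : Fin n →₀ ℕ} (hmq : ∀ k, m k < q) (hmj : m j = 0) : (m i : F) * coeff m f = 0 := by
  rcases Nat.eq_zero_or_pos (m i) with hmi | hmi
  · rw [hmi, Nat.cast_zero, zero_mul]
  set m' := m - Finsupp.single i 1
  have hm' : m' + Finsupp.single i 1 = m := tsub_add_cancel_of_le (Finsupp.single_le_iff.2 hmi)
  have hm'q : ∀ k, (Finsupp.single j 1 + m' : Fin n →₀ ℕ) k < q := by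
    intro k
    have := hmq k
    rcases eq_or_ne j k with rfl | hk
    · simp only [m', Finsupp.add_apply, Finsupp.tsub_apply, Finsupp.single_eq_same, hmj,
        zero_tsub, add_zero]
      omega
    · simp only [m', Finsupp.add_apply, Finsupp.tsub_apply, Finsupp.single_apply, if_neg hk]
      omega
  have hlow := coeff_eq_zero_of_X_pow_dvd
    (X_sq_dvd_linSubst_transvection_sub (i := i) (j := j) 1 f)
    (m := (Finsupp.single j 1 + m' : Fin n →₀ ℕ)) (by simp [m', hmj])
  rw [coeff_sub, coeff_eq_zero_of_mem_frobIdeal hf hm'q, zero_sub, neg_eq_zero, map_one, one_mul,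
    coeff_X_mul, coeff_pderiv, hm'] at hlow
  have hmi' : m i = m' i + 1 := by rw [← hm', Finsupp.add_apply, Finsupp.single_eq_same]
  rwa [hmi', Nat.cast_succ, mul_comm]

end FrobIdeal

section Invariants

variable {F : Type} [Field F] [Fintype F] {n q : ℕ}

lemma sum_smul_X_pow_card (hq : Fintype.card F = q) (c : Fin n → F) :
    (∑ j, c j • (X j : MvPolynomial (Fin n) F)) ^ q = ∑ j, c j • X j ^ q := by
  obtain ⟨k, hp, hcard⟩ := FiniteField.card F (ringChar F)
  have := Fact.mk hp
  subst hq
  rw [hcard, sum_pow_char_pow]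
  simp_rw [smul_pow, ← hcard, FiniteField.pow_card]

lemma frobIdeal_le_comap_linSubst (hq : Fintype.card F = q)
    (A : Matrix (Fin n) (Fin n) F) :
    frobIdeal F n q ≤ (frobIdeal F n q).comap (linSubst A) := by
  refine Ideal.span_le.2 ?_
  rintro _ ⟨i, rfl⟩
  rw [SetLike.mem_coe, Ideal.mem_comap, map_pow, linSubst_X, sum_smul_X_pow_card hq]
  refine Ideal.sum_mem _ fun j _ => ?_
  rw [smul_eq_C_mul]
  exact Ideal.mul_mem_left _ _ (Ideal.subset_span (Set.mem_range_self j))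

lemma linSubst_prod_X_pow_sub_mem_frobIdeal (hq : Fintype.card F = q)
    {A : Matrix (Fin n) (Fin n) F} (hA : A.det ≠ 0) :
    linSubst A (∏ i, X i ^ (q - 1)) - ∏ i, X i ^ (q - 1) ∈ frobIdeal F n q := by
  refine Matrix.diagonal_transvection_induction_of_det_ne_zero
    (fun A => linSubst A (∏ i, X i ^ (q - 1)) - ∏ i, X i ^ (q - 1) ∈ frobIdeal F n q)
    A hA ?_ ?_ ?_
  · intro d hd
    have hd' : ∀ k, d k ^ (q - 1) = 1 := fun k => hq ▸ FiniteField.pow_card_sub_one_eq_one _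
      (prod_ne_zero_iff.1 (Matrix.det_diagonal (d := d) ▸ hd) k (mem_univ k))
    simp only [map_prod, map_pow, linSubst_diagonal_X, mul_pow, ← map_pow C, hd', map_one,
      one_mul, sub_self, zero_mem]
  · intro t
    have hq1 : q - 1 + 1 = q := Nat.sub_add_cancel (hq ▸ Fintype.card_pos)
    obtain ⟨r, hr⟩ := X_pow_succ_dvd_linSubst_transvection_prod_sub t.hij t.c (q - 1)
    rw [Matrix.TransvectionStruct.toMatrix, hr, hq1]
    exact Ideal.mul_mem_right _ _ (Ideal.subset_span (Set.mem_range_self t.j))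
  · intro A B _ _ hA hB
    have hBA := frobIdeal_le_comap_linSubst hq B hA
    rw [Ideal.mem_comap, map_sub] at hBA
    rw [linSubst_mul, AlgHom.comp_apply]
    simpa using add_mem hBA hB

lemma natCast_card_sub_one_ne_zero (hq : Fintype.card F = q) : ((q - 1 : ℕ) : F) ≠ 0 := by
  rw [Nat.cast_sub (hq ▸ Fintype.card_pos), ← hq, FiniteField.cast_card_eq_zero, Nat.cast_one,
    zero_sub, neg_ne_zero]
  exact one_ne_zero

lemma exponent_eq_zero_or_eq_card_sub_one (hq : Fintype.card F = q) {f : MvPolynomial (Fin n) F}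
    (hf : ∀ d : Fin n → F, (∀ k, d k ≠ 0) →
      linSubst (Matrix.diagonal d) f - f ∈ frobIdeal F n q)
    {m : Fin n →₀ ℕ} (hm : m ∈ f.support) (hmq : ∀ k, m k < q) (i : Fin n) :
    m i = 0 ∨ m i = q - 1 := by
  have hpow (c : Fˣ) : c ^ m i = 1 := by
    have hc : ∀ k, (Pi.mulSingle i (c : F) : Fin n → F) k ≠ 0 := fun k => by
      rcases eq_or_ne k i with rfl | hk <;> simp [*]
    have hcoeff := coeff_eq_zero_of_mem_frobIdeal (hf _ hc) hmq
    rw [coeff_sub, coeff_linSubst_diagonal, sub_eq_zero, mul_eq_right₀ (mem_support_iff.1 hm),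
      prod_eq_single i (fun k _ hk => by rw [Pi.mulSingle_eq_of_ne hk, one_pow]) (by simp),
      Pi.mulSingle_eq_same] at hcoeff
    exact Units.val_eq_one.1 (by rw [Units.val_pow_eq_pow_val, hcoeff])
  have hdvd : q - 1 ∣ m i := hq ▸ (FiniteField.forall_pow_eq_one_iff F (m i)).1 hpow
  rcases Nat.eq_zero_or_pos (m i) with h | h
  · exact Or.inl h
  · exact Or.inr (le_antisymm (Nat.le_sub_one_of_lt (hmq i)) (Nat.le_of_dvd h hdvd))

lemma eq_zero_or_forall_eq_card_sub_one_of_mem_support (hq : Fintype.card F = q)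
    {f : MvPolynomial (Fin n) F}
    (hf : ∀ A : Matrix (Fin n) (Fin n) F, A.det ≠ 0 → linSubst A f - f ∈ frobIdeal F n q)
    {m : Fin n →₀ ℕ} (hm : m ∈ f.support) (hmq : ∀ k, m k < q) :
    m = 0 ∨ ∀ k, m k = q - 1 := by
  have hexp := exponent_eq_zero_or_eq_card_sub_one hq
    (fun d hd => hf _ (by simpa [Matrix.det_diagonal, prod_ne_zero_iff] using hd)) hm hmq
  by_contra! h
  obtain ⟨hm0, j, hj⟩ := h
  obtain ⟨i, hi⟩ : ∃ i, m i ≠ 0 := by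
    by_contra! h
    exact hm0 (Finsupp.ext h)
  have hmi : m i = q - 1 := (hexp i).resolve_left hi
  have hmj : m j = 0 := (hexp j).resolve_right hj
  have hij : i ≠ j := fun h => hi (h ▸ hmj)
  have hcoeff := natCast_mul_coeff_eq_zero_of_transvection (i := i) (hq ▸ Fintype.one_lt_card)
    (hf _ (by simp [Matrix.det_transvection_of_ne i j hij])) hmq hmj
  rw [hmi] at hcoeff
  exact (mul_ne_zero (natCast_card_sub_one_ne_zero hq) (mem_support_iff.1 hm)) hcoeff

lemma mem_span_one_prod_X_pow_of_forall_linSubst (hq : Fintype.card F = q)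
    {f : MvPolynomial (Fin n) F}
    (hf : ∀ A : Matrix (Fin n) (Fin n) F, A.det ≠ 0 → linSubst A f - f ∈ frobIdeal F n q)
    (hfq : ∀ m ∈ f.support, ∀ k, m k < q) :
    f ∈ Submodule.span F {1, ∏ i, X i ^ (q - 1)} := by
  rw [f.as_sum]
  refine Submodule.sum_mem _ fun m hm => ?_
  rcases eq_zero_or_forall_eq_card_sub_one_of_mem_support hq hf hm (hfq m hm) with rfl | htop
  · rw [monomial_zero', C_eq_smul_one]
    exact Submodule.smul_mem _ _ (Submodule.subset_span (by simp))
  · rw [monomial_eq, Finsupp.prod_fintype _ _ (fun _ => pow_zero _), ← smul_eq_C_mul]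
    simp only [htop]
    exact Submodule.smul_mem _ _ (Submodule.subset_span (by simp))

lemma mk_linSubst_eq_of_mem_span (hq : Fintype.card F = q) {A : Matrix (Fin n) (Fin n) F}
    (hA : A.det ≠ 0) {p : MvPolynomial (Fin n) F}
    (hp : p ∈ Submodule.span F {1, ∏ i, X i ^ (q - 1)}) :
    Ideal.Quotient.mk (frobIdeal F n q) (linSubst A p) = Ideal.Quotient.mk (frobIdeal F n q) p := by
  induction hp using Submodule.span_induction with
  | mem x hx =>
    rcases hx with rfl | rfl
    · rw [map_one]
    · exact (Ideal.Quotient.mk_eq_mk_iff_sub_mem _ _).2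
        (linSubst_prod_X_pow_sub_mem_frobIdeal hq hA)
  | zero => rw [map_zero]
  | add x y _ _ hx hy => rw [map_add, map_add, hx, map_add, hy]
  | smul a x _ hx => rw [map_smul, smul_eq_C_mul, smul_eq_C_mul, map_mul, map_mul, hx]

end Invariants

end MvPolynomial

/-- for `Q = F_q[x_1,…,x_n]/(x_1^q,…,x_n^q)` with `G = GL_n(F_q)`, the
invariant ring `Q^G` is spanned by `1` and the image of `x_1^{q-1}⋯x_n^{q-1}`, and
these two elements are linearly independent (so `Q^G` is 2-dimensional, with Hilbert
series `1 + t^{n(q-1)}`). -/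
theorem statement8 (F : Type) [Field F] [Fintype F] (q : ℕ) (hq : Fintype.card F = q)
    (n : ℕ) (hn : 1 ≤ n) :
    ({y : MvPolynomial (Fin n) F ⧸ frobIdeal F n q |
        ∀ g : GL (Fin n) F, ∀ f : MvPolynomial (Fin n) F,
          Ideal.Quotient.mk (frobIdeal F n q) f = y →
            Ideal.Quotient.mk (frobIdeal F n q) (glAct F n g f) = y}
      = (Submodule.span F
          {(1 : MvPolynomial (Fin n) F ⧸ frobIdeal F n q),
            Ideal.Quotient.mk (frobIdeal F n q) (∏ i, MvPolynomial.X i ^ (q - 1))} :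
          Set (MvPolynomial (Fin n) F ⧸ frobIdeal F n q)))
    ∧ LinearIndependent F
        ![(1 : MvPolynomial (Fin n) F ⧸ frobIdeal F n q),
          Ideal.Quotient.mk (frobIdeal F n q) (∏ i, MvPolynomial.X i ^ (q - 1))] := by
  have hspan : Submodule.span F {1, Ideal.Quotient.mk (frobIdeal F n q) (∏ i, X i ^ (q - 1))}
      = (Submodule.span F {1, ∏ i, X i ^ (q - 1)}).map
          (Ideal.Quotient.mkₐ F (frobIdeal F n q)).toLinearMap := by
    rw [Submodule.map_span, Set.image_pair]
    simp
  refine ⟨Set.ext fun y => ⟨fun hy => ?_, fun hy g f hfy => ?_⟩,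
    linearIndependent_one_mk_prod_X_pow hn (hq ▸ Fintype.one_lt_card)⟩
  · obtain ⟨f, rfl⟩ := Ideal.Quotient.mk_surjective y
    obtain ⟨r, hr, hrq⟩ := exists_mk_eq_of_exponents_lt (q := q) f
    rw [SetLike.mem_coe, hspan, ← hr]
    refine Submodule.mem_map_of_mem
      (mem_span_one_prod_X_pow_of_forall_linSubst hq (fun A hA => ?_) hrq)
    have hAr := hy (Matrix.nonsingInvUnit A (isUnit_iff_ne_zero.2 hA)) r hr
    rwa [glAct_eq_linSubst, ← hr, Ideal.Quotient.mk_eq_mk_iff_sub_mem] at hAr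
  · rw [SetLike.mem_coe, hspan] at hy
    obtain ⟨p, hp, rfl⟩ := hy
    change _ = Ideal.Quotient.mk (frobIdeal F n q) p
    rw [glAct_eq_linSubst, ← mk_linSubst_eq_of_mem_span hq g.det_ne_zero hp,
      Ideal.Quotient.mk_eq_mk_iff_sub_mem, ← map_sub]
    exact Ideal.mem_comap.1
      (frobIdeal_le_comap_linSubst hq _ ((Ideal.Quotient.mk_eq_mk_iff_sub_mem _ _).1 hfy))
end

section
/- Let q be a prime power, m ≥ 1, and Q = F_q[x_1,x_2]/(x_1^{q^m}, x_2^{q^m}). For each integer k' with 0 ≤ k' ≤ (q^m - q)/(q - 1), the element y_{k'} := ∑_{i=k'}^{(q^m-q)/(q-1)} x_1^{((q^m-q)/(q-1) + k' - i)(q-1)} x_2^{i(q-1)} is invariant under the action of GL_2(F_q) on Q. -/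
/-!
`GL_2(F_q)` is generated by invertible diagonal matrices and transvections, and the matrices whose
substitution preserves `I = (x^{q^m}, y^{q^m})` and fixes `y_k` modulo `I` form a monoid; by
Frobenius every linear substitution preserves `I`. A diagonal matrix fixes each monomial
`x^{a(q-1)} y^{b(q-1)}` since `d^{q-1} = 1`. For the transvection `x ↦ x + c y`, multiply by
`D = x^q y - x y^q`, which it fixes: `y_k` telescopes to
`D y_k = x^{q^m} y^{k(q-1)+1} - x^{k(q-1)+1} y^{q^m}`, and `x^{q^m} ↦ x^{q^m} + c y^{q^m}`, so `D`
times the change of `y_k` is divisible by `y^{q^m+1}`. As `D = y (x^q - x y^{q-1})` with `y` prime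
and not dividing the second factor, `y^{q^m}` divides the change. The other transvection follows
from the symmetry `y_k(x, y) = y_k(y, x)`.
-/

open MvPolynomial Finset

section YSum

variable {R : Type*} [CommRing R]

def ySum (r N k : ℕ) (x y : R) : R :=
  ∑ i ∈ Icc k N, x ^ ((N + k - i) * r) * y ^ (i * r)

theorem map_ySum {S F : Type*} [CommRing S] [FunLike F R S] [RingHomClass F R S] (φ : F)
    (r N k : ℕ) (x y : R) : φ (ySum r N k x y) = ySum r N k (φ x) (φ y) := by
  simp only [ySum, map_sum, map_mul, map_pow]

theorem ySum_comm (r N k : ℕ) (x y : R) : ySum r N k x y = ySum r N k y x := by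
  refine sum_nbij' (fun i => N + k - i) (fun i => N + k - i) ?_ ?_ ?_ ?_ ?_ <;>
    intro i hi <;> simp only [mem_Icc] at hi
  · simp only [mem_Icc]; omega
  · simp only [mem_Icc]; omega
  · omega
  · omega
  · rw [mul_comm, Nat.sub_sub_self (by omega)]

theorem ySum_smul_smul {K : Type*} [CommSemiring K] [Algebra K R] {r : ℕ} {a b : K}
    (ha : a ^ r = 1) (hb : b ^ r = 1) (N k : ℕ) (x y : R) :
    ySum r N k (a • x) (b • y) = ySum r N k x y := by
  simp only [ySum, smul_pow, pow_mul', ha, hb, one_smul]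

theorem ySum_self (r k : ℕ) (x y : R) : ySum r k k x y = x ^ (k * r) * y ^ (k * r) := by
  simp [ySum]

theorem ySum_succ {r N k : ℕ} (hk : k ≤ N + 1) (x y : R) :
    ySum r (N + 1) k x y = x ^ r * ySum r N k x y + x ^ (k * r) * y ^ ((N + 1) * r) := by
  rw [ySum, sum_Icc_succ_top hk, ySum, mul_sum, Nat.add_sub_cancel_left]
  congr 1
  refine sum_congr rfl fun i hi => ?_
  rw [mem_Icc] at hi
  rw [show N + 1 + k - i = (N + k - i) + 1 by omega]
  ring

theorem mul_ySum (r : ℕ) {N k : ℕ} (hk : k ≤ N) (x y : R) :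
    (x ^ (r + 1) * y - x * y ^ (r + 1)) * ySum r N k x y =
      x ^ ((N + 1) * r + 1) * y ^ (k * r + 1) - x ^ (k * r + 1) * y ^ ((N + 1) * r + 1) := by
  induction N, hk using Nat.le_induction with
  | base => rw [ySum_self]; ring
  | succ N hk ih => rw [ySum_succ (by omega), mul_add, mul_left_comm, ih]; ring

end YSum

section Frobenius

variable {F : Type*} [Field F] [Fintype F] {R : Type*} [CommRing R] [Algebra F R]

theorem frobeniusAlgHom_pow_apply (m : ℕ) (u : R) :
    (FiniteField.frobeniusAlgHom F R ^ m) u = u ^ Fintype.card F ^ m := by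
  rw [AlgHom.coe_pow, FiniteField.coe_frobeniusAlgHom, pow_iterate]

theorem add_smul_pow_card_pow (m : ℕ) (u v : R) (c : F) :
    (u + c • v) ^ Fintype.card F ^ m = u ^ Fintype.card F ^ m + c • v ^ Fintype.card F ^ m := by
  simp only [← frobeniusAlgHom_pow_apply, map_add, map_smul]

theorem pow_dvd_ySum_add_smul_sub [IsDomain R] {q m N k : ℕ} (hq : Fintype.card F = q)
    (hN : (N + 1) * (q - 1) + 1 = q ^ m) (hk : k ≤ N) {x y : R} (hy : Prime y) (hyx : ¬ y ∣ x)
    (c : F) : y ^ q ^ m ∣ ySum (q - 1) N k (x + c • y) y - ySum (q - 1) N k x y := by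
  have hq2 : 2 ≤ q := hq ▸ Fintype.one_lt_card
  obtain ⟨r, rfl⟩ : ∃ r, q = r + 1 := ⟨q - 1, by omega⟩
  rw [Nat.add_sub_cancel] at hN ⊢
  set x' := x + c • y
  set κ := k * r + 1
  have hD : x' ^ (r + 1) * y - x' * y ^ (r + 1) = x ^ (r + 1) * y - x * y ^ (r + 1) := by
    have := add_smul_pow_card_pow 1 x y c
    rw [hq, pow_one] at this
    rw [this]; simp only [x', Algebra.smul_def]; ring
  have hmul_diff : (x ^ (r + 1) * y - x * y ^ (r + 1)) * (ySum r N k x' y - ySum r N k x y) =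
      y ^ (r + 1) ^ m * (c • y ^ κ - (x' ^ κ - x ^ κ)) := by
    rw [mul_sub, ← hD, mul_ySum r hk, hD, mul_ySum r hk, hN, ← hq, add_smul_pow_card_pow]
    simp only [Algebra.smul_def]; ring
  obtain ⟨W, hW⟩ : y ∣ c • y ^ κ - (x' ^ κ - x ^ κ) := by
    refine dvd_sub ?_
      ((Dvd.intro_left (algebraMap F R c) ?_).trans (sub_dvd_pow_sub_pow x' x κ))
    · rw [Algebra.smul_def]; exact (dvd_pow_self y (by omega)).mul_left _
    · simp only [x', Algebra.smul_def]; ring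
  have hE : ¬ y ∣ x ^ (r + 1) - x * y ^ r := fun h => hyx <| hy.dvd_of_dvd_pow <|
    (dvd_sub_left ((dvd_pow_self y (show r ≠ 0 by omega)).mul_left x)).1 h
  refine hy.pow_dvd_of_dvd_mul_left _ hE ⟨W, mul_left_cancel₀ hy.ne_zero ?_⟩
  linear_combination hmul_diff + y ^ (r + 1) ^ m * hW

end Frobenius

section MatrixSubst

variable {R : Type*} [CommRing R] {σ : Type*} [Fintype σ]

noncomputable def matrixSubst (M : Matrix σ σ R) :
    MvPolynomial σ R →ₐ[R] MvPolynomial σ R :=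
  aeval fun i => ∑ j, M i j • X j

@[simp]
theorem matrixSubst_X (M : Matrix σ σ R) (i : σ) : matrixSubst M (X i) = ∑ j, M i j • X j :=
  aeval_X _ _

theorem matrixSubst_mul (M N : Matrix σ σ R) :
    matrixSubst (M * N) = (matrixSubst N).comp (matrixSubst M) := by
  refine algHom_ext fun i => ?_
  simp only [matrixSubst_X, AlgHom.comp_apply, map_sum, map_smul, Matrix.mul_apply, sum_smul,
    smul_sum, smul_smul]
  exact sum_comm

variable [DecidableEq σ]

theorem matrixSubst_one : matrixSubst (1 : Matrix σ σ R) = AlgHom.id R _ :=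
  algHom_ext fun i => by simp [Matrix.one_apply]

theorem matrixSubst_diagonal_X (d : σ → R) (i : σ) :
    matrixSubst (Matrix.diagonal d) (X i) = d i • X i := by
  simp [Matrix.diagonal_apply]

theorem matrixSubst_transvection_X_self (i j : σ) (c : R) :
    matrixSubst (Matrix.transvection i j c) (X i) = X i + c • X j := by
  simp [Matrix.transvection, Matrix.one_apply, Matrix.single_apply, add_smul, sum_add_distrib]

theorem matrixSubst_transvection_X_of_ne {i j l : σ} (hl : l ≠ i) (c : R) :
    matrixSubst (Matrix.transvection i j c) (X l) = X l := by
  simp [Matrix.transvection, Matrix.one_apply, hl.symm]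

end MatrixSubst

section Stabilizer

variable {R : Type*} [CommRing R] {σ : Type*} [Fintype σ] [DecidableEq σ]

def substStabilizer (I : Ideal (MvPolynomial σ R)) (Y : MvPolynomial σ R) :
    Submonoid (Matrix σ σ R) where
  carrier := {M | I ≤ I.comap (matrixSubst M) ∧ matrixSubst M Y - Y ∈ I}
  one_mem' := by simp [matrixSubst_one]
  mul_mem' := by
    rintro M N ⟨hMI, hMY⟩ ⟨hNI, hNY⟩
    refine ⟨fun z hz => ?_, ?_⟩
    · rw [Ideal.mem_comap, matrixSubst_mul, AlgHom.comp_apply]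
      exact Ideal.mem_comap.mp (hNI (Ideal.mem_comap.mp (hMI hz)))
    · have h := I.add_mem (hNI hMY) hNY
      rwa [map_sub, sub_add_sub_cancel, ← AlgHom.comp_apply, ← matrixSubst_mul] at h

end Stabilizer

section FrobIdeal

variable {F : Type} [Field F] {n : ℕ}

theorem mem_frobIdeal_of_X_pow_dvd {N : ℕ} {P : MvPolynomial (Fin n) F} (i : Fin n)
    (h : X i ^ N ∣ P) : P ∈ frobIdeal F n N := by
  obtain ⟨Z, rfl⟩ := h
  exact Ideal.mul_mem_right _ _ (Ideal.subset_span ⟨i, rfl⟩)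

variable [Fintype F] {q m : ℕ}

theorem frobIdeal_le_comap_matrixSubst (hq : Fintype.card F = q)
    (M : Matrix (Fin n) (Fin n) F) :
    frobIdeal F n (q ^ m) ≤ (frobIdeal F n (q ^ m)).comap (matrixSubst M) := by
  subst hq
  rw [frobIdeal, Ideal.span_le]
  rintro _ ⟨i, rfl⟩
  rw [SetLike.mem_coe, Ideal.mem_comap, map_pow, matrixSubst_X, ← frobeniusAlgHom_pow_apply,
    map_sum]
  refine sum_mem fun j _ => ?_
  rw [map_smul, frobeniusAlgHom_pow_apply, smul_eq_C_mul]
  exact Ideal.mul_mem_left _ _ (Ideal.subset_span ⟨j, rfl⟩)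

theorem mem_substStabilizer_frobIdeal (hq : Fintype.card F = q) {M : Matrix (Fin n) (Fin n) F}
    {Y : MvPolynomial (Fin n) F} :
    M ∈ substStabilizer (frobIdeal F n (q ^ m)) Y ↔
      matrixSubst M Y - Y ∈ frobIdeal F n (q ^ m) :=
  and_iff_right (frobIdeal_le_comap_matrixSubst hq M)

end FrobIdeal

section GLTwo

variable {F : Type} [Field F] [Fintype F] {q m N k : ℕ}

theorem diagonal_mem_substStabilizer (hq : Fintype.card F = q) {d : Fin 2 → F}
    (hd : ∀ i, d i ≠ 0) :
    Matrix.diagonal d ∈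
      substStabilizer (frobIdeal F 2 (q ^ m)) (ySum (q - 1) N k (X 0) (X 1)) := by
  have hroot (i : Fin 2) : d i ^ (q - 1) = 1 := hq ▸ FiniteField.pow_card_sub_one_eq_one _ (hd i)
  rw [mem_substStabilizer_frobIdeal hq, map_ySum, matrixSubst_diagonal_X, matrixSubst_diagonal_X,
    ySum_smul_smul (hroot 0) (hroot 1), sub_self]
  exact zero_mem _

theorem transvection_mem_substStabilizer (hq : Fintype.card F = q)
    (hN : (N + 1) * (q - 1) + 1 = q ^ m) (hk : k ≤ N) (t : Matrix.TransvectionStruct (Fin 2) F) :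
    t.toMatrix ∈ substStabilizer (frobIdeal F 2 (q ^ m)) (ySum (q - 1) N k (X 0) (X 1)) := by
  rw [mem_substStabilizer_frobIdeal hq]
  obtain ⟨a, b, hab, c⟩ := t
  rw [Matrix.TransvectionStruct.toMatrix_mk]
  obtain ⟨rfl, rfl⟩ | ⟨rfl, rfl⟩ : (a = 0 ∧ b = 1) ∨ (a = 1 ∧ b = 0) := by omega
  all_goals rw [map_ySum, matrixSubst_transvection_X_self,
    matrixSubst_transvection_X_of_ne (by decide)]
  · exact mem_frobIdeal_of_X_pow_dvd 1
      (pow_dvd_ySum_add_smul_sub hq hN hk X_prime (by simp) c)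
  · rw [ySum_comm _ _ _ (X 0), ySum_comm _ _ _ (X 0)]
    exact mem_frobIdeal_of_X_pow_dvd 0
      (pow_dvd_ySum_add_smul_sub hq hN hk X_prime (by simp) c)

end GLTwo

theorem div_add_one_mul_sub_one_add_one_eq_pow {q m : ℕ} (hq : 1 ≤ q) (hm : 1 ≤ m) :
    ((q ^ m - q) / (q - 1) + 1) * (q - 1) + 1 = q ^ m := by
  have hqm : q ≤ q ^ m := le_self_pow hq (by omega)
  have hdvd : q - 1 ∣ q ^ m - q := by
    rw [show q ^ m - q = (q ^ m - 1 ^ m) - (q - 1) by rw [one_pow]; omega]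
    exact Nat.dvd_sub (Nat.sub_dvd_pow_sub_pow q 1 m) dvd_rfl
  rw [add_one_mul, Nat.div_mul_cancel hdvd]
  omega

/-- with `N = (q^m-q)/(q-1)`, for `0 ≤ k' ≤ N` the element
`y_{k'} = ∑_{i=k'}^{N} x_1^{(N+k'-i)(q-1)} x_2^{i(q-1)}` of
`Q = F_q[x_1,x_2]/(x_1^{q^m},x_2^{q^m})` is `GL_2(F_q)`-invariant. -/
theorem statement10 (F : Type) [Field F] [Fintype F] (q : ℕ) (hq : Fintype.card F = q)
    (m : ℕ) (hm : 1 ≤ m) (k' : ℕ) (hk' : k' ≤ (q ^ m - q) / (q - 1))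
    (g : GL (Fin 2) F) :
    Ideal.Quotient.mk (frobIdeal F 2 (q ^ m))
        (glAct F 2 g
          (∑ i ∈ Finset.Icc k' ((q ^ m - q) / (q - 1)),
            MvPolynomial.X 0 ^ (((q ^ m - q) / (q - 1) + k' - i) * (q - 1)) *
              MvPolynomial.X 1 ^ (i * (q - 1))))
      = Ideal.Quotient.mk (frobIdeal F 2 (q ^ m))
          (∑ i ∈ Finset.Icc k' ((q ^ m - q) / (q - 1)),
            MvPolynomial.X 0 ^ (((q ^ m - q) / (q - 1) + k' - i) * (q - 1)) *
              MvPolynomial.X 1 ^ (i * (q - 1))) := by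
  have hN := div_add_one_mul_sub_one_add_one_eq_pow (hq ▸ Fintype.card_pos) hm
  have hdet : (g : Matrix (Fin 2) (Fin 2) F).det ≠ 0 :=
    ((Matrix.isUnit_iff_isUnit_det _).mp g.isUnit).ne_zero
  rw [Ideal.Quotient.eq]
  show matrixSubst (g : Matrix (Fin 2) (Fin 2) F) (ySum (q - 1) _ k' (X 0) (X 1)) - _ ∈ _
  refine (mem_substStabilizer_frobIdeal hq).mp ?_
  refine Matrix.diagonal_transvection_induction_of_det_ne_zero _ _ hdet (fun d hd => ?_)
    (transvection_mem_substStabilizer hq hN hk') fun _ _ _ _ => mul_mem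
  rw [Matrix.det_diagonal, prod_ne_zero_iff] at hd
  exact diagonal_mem_substStabilizer hq fun i => hd i (mem_univ i)
end

section
/- Let q be a prime power and let y_{k'} ∈ F_q[x_1,x_2]/(x_1^{q^2},x_2^{q^2}) denote the invariants y_{k'} = ∑_{i=k'}^{q} x_1^{(q+k'-i)(q-1)} x_2^{i(q-1)} for 0 ≤ k' ≤ q. Then y_0^2 = y_q, y_0 y_2 = - x_1^{q^2-1} x_2^{q^2-1} and y_2^2 = 0, and all other products y_i y_j with {i,j} not among {0,0},{0,2},{2,2} vanish; e.g. y_0 y_1 = 0. -/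
open MvPolynomial Finset

/-- The image in `Q = F_q[x_1,x_2]/(x_1^{q^2},x_2^{q^2})` of
`y_{k'} = ∑_{i=k'}^{q} x_1^{(q+k'-i)(q-1)} x_2^{i(q-1)}`. -/
noncomputable def yQ (F : Type) [Field F] (q k' : ℕ) :
    MvPolynomial (Fin 2) F ⧸ frobIdeal F 2 (q ^ 2) :=
  Ideal.Quotient.mk (frobIdeal F 2 (q ^ 2))
    (∑ i ∈ Finset.Icc k' q,
      MvPolynomial.X 0 ^ ((q + k' - i) * (q - 1)) * MvPolynomial.X 1 ^ (i * (q - 1)))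

section aux

variable (F : Type) [Field F] (q : ℕ)

lemma memX0 (a b : ℕ) (h : q ^ 2 ≤ a) :
    Ideal.Quotient.mk (frobIdeal F 2 (q ^ 2))
      ((MvPolynomial.X 0 : MvPolynomial (Fin 2) F) ^ a * MvPolynomial.X 1 ^ b) = 0 := by
  rw [Ideal.Quotient.eq_zero_iff_mem]
  have e : (MvPolynomial.X 0 : MvPolynomial (Fin 2) F) ^ a * MvPolynomial.X 1 ^ b
      = MvPolynomial.X 0 ^ (q ^ 2) * (MvPolynomial.X 0 ^ (a - q ^ 2) * MvPolynomial.X 1 ^ b) := by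
    rw [← mul_assoc, ← pow_add]
    congr 2
    omega
  rw [e]
  exact Ideal.mul_mem_right _ _ (Ideal.subset_span ⟨0, rfl⟩)

lemma memX1 (a b : ℕ) (h : q ^ 2 ≤ b) :
    Ideal.Quotient.mk (frobIdeal F 2 (q ^ 2))
      ((MvPolynomial.X 0 : MvPolynomial (Fin 2) F) ^ a * MvPolynomial.X 1 ^ b) = 0 := by
  rw [Ideal.Quotient.eq_zero_iff_mem]
  have e : (MvPolynomial.X 0 : MvPolynomial (Fin 2) F) ^ a * MvPolynomial.X 1 ^ b
      = MvPolynomial.X 1 ^ (q ^ 2) * (MvPolynomial.X 0 ^ a * MvPolynomial.X 1 ^ (b - q ^ 2)) := by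
    have hb : b = q ^ 2 + (b - q ^ 2) := by omega
    rw [hb]
    ring_nf
    congr 2
    omega
  rw [e]
  exact Ideal.mul_mem_right _ _ (Ideal.subset_span ⟨1, rfl⟩)

lemma pow_bound (m : ℕ) (hq : 2 ≤ q) (hm : q + 2 ≤ m) : q ^ 2 ≤ m * (q - 1) := by
  obtain ⟨r, rfl⟩ : ∃ r, q = r + 2 := ⟨q - 2, by omega⟩
  have h1 : (r + 2) ^ 2 = r * r + 4 * r + 4 := by ring
  have h2 : m * (r + 2 - 1) = m * r + m := by
    have : r + 2 - 1 = r + 1 := by omega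
    rw [this]; ring
  have h3 : (r + 4) * r ≤ m * r := Nat.mul_le_mul_right r (by omega)
  have h4 : (r + 4) * r = r * r + 4 * r := by ring
  omega

end aux

section aux2

variable (F : Type) [Field F] (q : ℕ)

lemma card_slice (i j s : ℕ) (hs : i + j ≤ s) :
    ((Finset.Icc i q ×ˢ Finset.Icc j q).filter fun p => p.1 + p.2 = s).card
      = min q (s - j) + 1 - max i (s - q) := by
  rw [← Nat.card_Icc]
  apply Finset.card_bij' (fun p _ => p.1) (fun a _ => (a, s - a))
  · intro p hp
    simp only [Finset.mem_filter, Finset.mem_product, Finset.mem_Icc] at hp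
    simp only [Finset.mem_Icc]
    omega
  · intro a ha
    simp only [Finset.mem_Icc] at ha
    simp only [Finset.mem_filter, Finset.mem_product, Finset.mem_Icc]
    omega
  · intro p hp
    simp only [Finset.mem_filter, Finset.mem_product, Finset.mem_Icc] at hp
    have : s - p.1 = p.2 := by omega
    simp [this]
  · intro a _
    rfl

lemma key (hq2 : 2 ≤ q) (i j : ℕ) (hi : i ≤ q) (hj : j ≤ q) :
    yQ F q i * yQ F q j
      = ∑ s ∈ ((Finset.Icc i q ×ˢ Finset.Icc j q).image fun p => p.1 + p.2),
          ((Finset.Icc i q ×ˢ Finset.Icc j q).filter fun p => p.1 + p.2 = s).card •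
            (if q + i + j - 1 ≤ s ∧ s ≤ q + 1 then
              Ideal.Quotient.mk (frobIdeal F 2 (q ^ 2))
                ((MvPolynomial.X 0 : MvPolynomial (Fin 2) F) ^ ((2 * q + i + j - s) * (q - 1))
                  * MvPolynomial.X 1 ^ (s * (q - 1)))
            else 0) := by
  rw [← Finset.sum_comp]
  unfold yQ
  rw [← map_mul, Finset.sum_mul_sum, map_sum]
  simp only [map_sum]
  rw [← Finset.sum_product']
  apply Finset.sum_congr rfl
  rintro ⟨a, b⟩ hp
  simp only [Finset.mem_product, Finset.mem_Icc] at hp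
  dsimp only
  have ecomb : (MvPolynomial.X 0 : MvPolynomial (Fin 2) F) ^ ((q + i - a) * (q - 1))
        * MvPolynomial.X 1 ^ (a * (q - 1))
        * (MvPolynomial.X 0 ^ ((q + j - b) * (q - 1)) * MvPolynomial.X 1 ^ (b * (q - 1)))
      = MvPolynomial.X 0 ^ ((q + i - a) * (q - 1) + (q + j - b) * (q - 1))
        * MvPolynomial.X 1 ^ (a * (q - 1) + b * (q - 1)) := by
    rw [mul_mul_mul_comm, ← pow_add, ← pow_add]
  rw [ecomb]
  by_cases hw : q + i + j - 1 ≤ a + b ∧ a + b ≤ q + 1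
  · rw [if_pos hw]
    have e0 : (q + i - a) * (q - 1) + (q + j - b) * (q - 1)
        = (2 * q + i + j - (a + b)) * (q - 1) := by
      rw [← Nat.add_mul]; exact congrArg (· * (q - 1)) (by omega)
    have e1 : a * (q - 1) + b * (q - 1) = (a + b) * (q - 1) := (Nat.add_mul a b _).symm
    rw [e0, e1]
  · rw [if_neg hw]
    rcases (by omega : a + b + 2 ≤ q + i + j ∨ q + 2 ≤ a + b) with h | h
    · apply memX0
      have e : (q + i - a) * (q - 1) + (q + j - b) * (q - 1)
          = (2 * q + i + j - (a + b)) * (q - 1) := by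
        rw [← Nat.add_mul]; congr 1; omega
      rw [e]
      exact pow_bound q _ hq2 (by omega)
    · apply memX1
      have e : a * (q - 1) + b * (q - 1) = (a + b) * (q - 1) := by rw [← Nat.add_mul]
      rw [e]
      exact pow_bound q _ hq2 h

end aux2

section aux3

variable (F : Type) [Field F] [Fintype F] (q : ℕ)

lemma qcast (hq : Fintype.card F = q) :
    ((q : ℕ) : MvPolynomial (Fin 2) F ⧸ frobIdeal F 2 (q ^ 2)) = 0 := by
  have hF : (q : F) = 0 := by rw [← hq]; exact FiniteField.cast_card_eq_zero F
  have h := map_natCast (algebraMap F (MvPolynomial (Fin 2) F ⧸ frobIdeal F 2 (q ^ 2))) q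
  rw [← h, hF, map_zero]

lemma vanish (hq : Fintype.card F = q) (hq2 : 2 ≤ q) (i j : ℕ) (hi : i ≤ q) (hj : j ≤ q)
    (H : ∀ s, q + i + j - 1 ≤ s → s ≤ q + 1 → min q (s - j) + 1 - max i (s - q) = q) :
    yQ F q i * yQ F q j = 0 := by
  rw [key F q hq2 i j hi hj]
  apply Finset.sum_eq_zero
  intro s _
  by_cases hw : q + i + j - 1 ≤ s ∧ s ≤ q + 1
  · rw [card_slice q i j s (by omega), H s hw.1 hw.2, nsmul_eq_mul, qcast F q hq, zero_mul]
  · rw [if_neg hw, smul_zero]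

end aux3


/-- multiplicative relations among the invariants `y_{k'}` in
`Q = F_q[x_1,x_2]/(x_1^{q^2},x_2^{q^2})`: `y_0² = y_q`, `y_0·y_2 = -x_1^{q^2-1}x_2^{q^2-1}`,
`y_2² = 0`, and all other products `y_i·y_j` vanish (e.g. `y_0·y_1 = 0`). -/
theorem statement14 (F : Type) [Field F] [Fintype F] (q : ℕ) (hq : Fintype.card F = q) :
    (yQ F q 0) ^ 2 = yQ F q q
    ∧ yQ F q 0 * yQ F q 2
        = - Ideal.Quotient.mk (frobIdeal F 2 (q ^ 2))
            (MvPolynomial.X 0 ^ (q ^ 2 - 1) * MvPolynomial.X 1 ^ (q ^ 2 - 1))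
    ∧ (yQ F q 2) ^ 2 = 0
    ∧ yQ F q 0 * yQ F q 1 = 0
    ∧ ∀ i j : ℕ, i ≤ q → j ≤ q →
        ¬(i = 0 ∧ j = 0) → ¬(i = 0 ∧ j = 2) → ¬(i = 2 ∧ j = 0) → ¬(i = 2 ∧ j = 2) →
        yQ F q i * yQ F q j = 0 := by
  have hq2 : 2 ≤ q := by rw [← hq]; exact Fintype.one_lt_card
  have hsq : (q + 1) * (q - 1) = q ^ 2 - 1 := by
    obtain ⟨r, rfl⟩ : ∃ r, q = r + 2 := ⟨q - 2, by omega⟩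
    have h1 : (r + 2 + 1) * (r + 2 - 1) = r * r + 4 * r + 3 := by
      have : r + 2 - 1 = r + 1 := by omega
      rw [this]; ring
    have h2 : (r + 2) ^ 2 = r * r + 4 * r + 4 := by ring
    omega
  refine ⟨?_, ?_, ?_, ?_, ?_⟩
  · -- y₀² = y_q
    rw [pow_two (yQ F q 0), key F q hq2 0 0 (by omega) (by omega)]
    rw [Finset.sum_eq_single_of_mem q ?memq ?others]
    case memq =>
      refine Finset.mem_image.mpr ⟨(0, q), ?_, by simp⟩
      simp [Finset.mem_product, Finset.mem_Icc]
    case others =>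
      intro s _ hne
      by_cases hw : q + 0 + 0 - 1 ≤ s ∧ s ≤ q + 1
      · rw [card_slice q 0 0 s (by omega),
          show min q (s - 0) + 1 - max 0 (s - q) = q by omega,
          nsmul_eq_mul, qcast F q hq, zero_mul]
      · rw [if_neg hw, smul_zero]
    · rw [card_slice q 0 0 q (by omega),
        show min q (q - 0) + 1 - max 0 (q - q) = q + 1 by omega,
        if_pos (by omega : q + 0 + 0 - 1 ≤ q ∧ q ≤ q + 1),
        succ_nsmul, nsmul_eq_mul, qcast F q hq, zero_mul, zero_add]
      unfold yQ
      rw [Finset.Icc_self, Finset.sum_singleton]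
      simp only [show 2 * q + 0 + 0 - q = q from by omega, show q + q - q = q from by omega]
  · -- y₀·y₂
    rw [key F q hq2 0 2 (by omega) hq2]
    rw [Finset.sum_eq_single_of_mem (q + 1) ?memq ?others]
    case memq =>
      refine Finset.mem_image.mpr ⟨(q - 1, 2), ?_, by simp; omega⟩
      simp [Finset.mem_product, Finset.mem_Icc]
      omega
    case others =>
      intro s _ hne
      rw [if_neg (by omega), smul_zero]
    · rw [card_slice q 0 2 (q + 1) (by omega),
        show min q (q + 1 - 2) + 1 - max 0 (q + 1 - q) = q - 1 by omega,
        if_pos (by omega : q + 0 + 2 - 1 ≤ q + 1 ∧ q + 1 ≤ q + 1),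
        nsmul_eq_mul, Nat.cast_sub (by omega : 1 ≤ q), Nat.cast_one, sub_mul, one_mul,
        qcast F q hq, zero_mul, zero_sub]
      rw [show 2 * q + 0 + 2 - (q + 1) = q + 1 from by omega, hsq]
  · -- y₂² = 0
    rw [pow_two (yQ F q 2)]
    exact vanish F q hq hq2 2 2 hq2 hq2 (by omega)
  · -- y₀·y₁ = 0
    exact vanish F q hq hq2 0 1 (by omega) (by omega) (by omega)
  · intro i j hi hj h00 h02 h20 h22
    exact vanish F q hq hq2 i j hi hj (by omega)
end
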